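/- Let γ₁, γ₂ ∈ ρ_NED(A) with γ₁ < γ₂ and set F(l) = U_{γ₁}(l) ∩ S_{γ₂}(l) for l ∈ ℤ. Then the following are equivalent: (A') F(l) ≠ {0} for some l ∈ ℤ; (B') there exists ζ ∈ (γ₁, γ₂) ∩ Σ_NED(A); (C') dim S_{γ₁}(l) < dim S_{γ₂}(l) for all l; (D') dim U_{γ₁}(l) > dim U_{γ₂}(l) for all l. -/

import Mathlib

/-! A dichotomy with weight `ε ^ l` over all of `ℤ` forces `ε = 1` in positive dimension
(`‖P l‖ + ‖1 - P l‖ ≥ 1` cannot be `O(ε ^ l)` as `l → -∞`), so every dichotomy here is an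
exponential dichotomy, and its stable and unstable sets are the range and kernel of its projector.
Stable sets grow and unstable sets shrink with the weight, so `range P₁ ≤ range P₂` with
`range P₂ = range P₁ ⊕ (ker P₁ ⊓ range P₂)`; this gives (A') ⇔ (C') ⇔ (D'), the ranks being
independent of `l`. If the ranks agree, then `P₁ = P₂`, and rescaling the two estimates yields a
dichotomy for every weight in between. If there is no spectrum in between, the stable subspace
is locally constant in the weight, hence its dimension is constant on `[γ₁, γ₂]`. -/

open Matrix

attribute [local instance] Matrix.linftyOpNormedAddCommGroup

abbrev Mat (N : ℕ) := Matrix (Fin N) (Fin N) ℝ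

noncomputable def fundSolNat {N : ℕ} (A : ℤ → GL (Fin N) ℝ) : ℕ → GL (Fin N) ℝ
  | 0 => 1
  | n + 1 => A (n : ℤ) * fundSolNat A n

noncomputable def fundSolNeg {N : ℕ} (A : ℤ → GL (Fin N) ℝ) : ℕ → GL (Fin N) ℝ
  | 0 => (A (-1))⁻¹
  | n + 1 => (A (Int.negSucc (n + 1)))⁻¹ * fundSolNeg A n

noncomputable def fundSol {N : ℕ} (A : ℤ → GL (Fin N) ℝ) : ℤ → GL (Fin N) ℝ
  | Int.ofNat n => fundSolNat A n
  | Int.negSucc n => fundSolNeg A n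

/-- The evolution operator `Φ(k,l)` of `x_{k+1} = A_k x_k`. -/
noncomputable def evol {N : ℕ} (A : ℤ → GL (Fin N) ℝ) (k l : ℤ) : Mat N :=
  ↑(fundSol A k * (fundSol A l)⁻¹)

def IsInvariantProjector {N : ℕ} (A : ℤ → GL (Fin N) ℝ) (P : ℤ → Mat N) : Prop :=
  (∀ k, P k * P k = P k) ∧ ∀ k, P (k + 1) * (A k : Mat N) = (A k : Mat N) * P k

/-- Evolution operator `Φ_γ(k,l) = γ^{-(k-l)} Φ(k,l)` of `x_{k+1} = (1/γ) A_k x_k`. -/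
noncomputable def evolW {N : ℕ} (A : ℤ → GL (Fin N) ℝ) (γ : ℝ) (k l : ℤ) : Mat N :=
  γ ^ (l - k) • evol A k l

def NEDWith {N : ℕ} (A : ℤ → GL (Fin N) ℝ) (γ : ℝ) (P : ℤ → Mat N) (K α ε : ℝ) : Prop :=
  IsInvariantProjector A P ∧ 1 ≤ K ∧ 0 < α ∧ α < 1 ∧ 1 ≤ ε ∧
    (∀ k l : ℤ, l ≤ k → ‖evolW A γ k l * P l‖ ≤ K * α ^ (k - l) * ε ^ l) ∧
    (∀ k l : ℤ, k ≤ l → ‖evolW A γ k l * (1 - P l)‖ ≤ K * (1 / α) ^ (k - l) * ε ^ l)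

def HasNED {N : ℕ} (A : ℤ → GL (Fin N) ℝ) (γ : ℝ) : Prop :=
  ∃ P K α ε, NEDWith A γ P K α ε

def HasStrongNED {N : ℕ} (A : ℤ → GL (Fin N) ℝ) (γ : ℝ) : Prop :=
  ∃ P K α ε, NEDWith A γ P K α ε ∧ α * ε ^ 2 < 1

def HasED {N : ℕ} (A : ℤ → GL (Fin N) ℝ) (γ : ℝ) : Prop :=
  ∃ P K α, NEDWith A γ P K α 1

def SigmaNED {N : ℕ} (A : ℤ → GL (Fin N) ℝ) : Set ℝ := {γ | 0 < γ ∧ ¬ HasStrongNED A γ}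

def rhoNED {N : ℕ} (A : ℤ → GL (Fin N) ℝ) : Set ℝ := {γ | 0 < γ ∧ HasStrongNED A γ}

def SigmaED {N : ℕ} (A : ℤ → GL (Fin N) ℝ) : Set ℝ := {γ | 0 < γ ∧ ¬ HasED A γ}

def stableSet {N : ℕ} (A : ℤ → GL (Fin N) ℝ) (γ ε : ℝ) (l : ℤ) : Set (Fin N → ℝ) :=
  {ξ | ∃ C : ℝ, ∀ k : ℤ, l ≤ k → ‖(evol A k l).mulVec ξ‖ * γ ^ (-k) * ε ^ (-l) ≤ C}

def unstableSet {N : ℕ} (A : ℤ → GL (Fin N) ℝ) (γ ε : ℝ) (l : ℤ) : Set (Fin N → ℝ) :=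
  {ξ | ∃ C : ℝ, ∀ k : ℤ, k ≤ l → ‖(evol A k l).mulVec ξ‖ * γ ^ (-k) * ε ^ (-l) ≤ C}

attribute [local instance] Matrix.linftyOpNormedSpace

open Filter Topology

lemma exists_forall_mul_le_iff {𝕜 ι : Type*} [Field 𝕜] [LinearOrder 𝕜] [IsStrictOrderedRing 𝕜]
    {p : ι → Prop} {f : ι → 𝕜} {c : 𝕜} (hc : 0 < c) :
    (∃ C, ∀ i, p i → f i * c ≤ C) ↔ ∃ C, ∀ i, p i → f i ≤ C :=
  ⟨fun ⟨C, h⟩ => ⟨C / c, fun i hi => (le_div_iff₀ hc).2 (h i hi)⟩,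
    fun ⟨C, h⟩ => ⟨C * c, fun i hi => mul_le_mul_of_nonneg_right (h i hi) hc.le⟩⟩

lemma nonpos_of_forall_le_mul_pow {v c α : ℝ} (hα0 : 0 ≤ α) (hα1 : α < 1)
    (h : ∀ n : ℕ, v ≤ c * α ^ n) : v ≤ 0 :=
  ge_of_tendsto (by simpa using (tendsto_pow_atTop_nhds_zero_of_lt_one hα0 hα1).const_mul c)
    (Eventually.of_forall h)

lemma Submodule.setFinrank_coe {R M : Type*} [Ring R] [AddCommGroup M] [Module R M]
    (p : Submodule R M) : Set.finrank R (p : Set M) = Module.finrank R p := by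
  rw [Set.finrank, Submodule.span_eq]

lemma Submodule.finrank_eq_add_finrank_inf_of_isCompl {K V : Type*} [DivisionRing K]
    [AddCommGroup V] [Module K V] [FiniteDimensional K V] {S U T : Submodule K V}
    (hSU : IsCompl S U) (hST : S ≤ T) :
    Module.finrank K T = Module.finrank K S + Module.finrank K (U ⊓ T : Submodule K V) := by
  have hsup : S ⊔ U ⊓ T = T := by
    rw [← sup_inf_assoc_of_le U hST, hSU.sup_eq_top, top_inf_eq]
  have hinf : S ⊓ (U ⊓ T) = ⊥ :=
    eq_bot_iff.2 ((inf_le_inf_left S inf_le_left).trans hSU.inf_eq_bot.le)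
  have := Submodule.finrank_sup_add_finrank_inf_eq S (U ⊓ T)
  rwa [hsup, hinf, finrank_bot, add_zero] at this

lemma Matrix.isIdempotentElem_mulVecLin {R n : Type*} [CommSemiring R] [Fintype n]
    {p : Matrix n n R} (hp : IsIdempotentElem p) : IsIdempotentElem p.mulVecLin := by
  rw [IsIdempotentElem, Module.End.mul_eq_comp, ← Matrix.mulVecLin_mul, hp.eq]

lemma Matrix.rank_add_finrank_ker {K m n : Type*} [Field K] [Fintype n] (p : Matrix m n K) :
    p.rank + Module.finrank K (LinearMap.ker p.mulVecLin) = Fintype.card n := by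
  rw [Matrix.rank, LinearMap.finrank_range_add_finrank_ker, Module.finrank_fintype_fun_eq_card]

section Evolution

variable {N : ℕ} (A : ℤ → GL (Fin N) ℝ)

lemma fundSol_add_one (k : ℤ) : fundSol A (k + 1) = A k * fundSol A k := by
  match k with
  | Int.ofNat n => rfl
  | Int.negSucc 0 => exact (mul_inv_cancel (A (-1))).symm
  | Int.negSucc (n + 1) => exact (mul_inv_cancel_left (A (Int.negSucc (n + 1))) _).symm

@[simp]
lemma evol_self (l : ℤ) : evol A l l = 1 := by
  simp [evol]

lemma evol_mul_evol (k m l : ℤ) : evol A k m * evol A m l = evol A k l := by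
  simp only [evol, ← Units.val_mul]
  group

lemma isUnit_det_evol (k l : ℤ) : IsUnit (evol A k l).det :=
  (Matrix.isUnit_iff_isUnit_det _).1 (Units.isUnit _)

variable {A} {P : ℤ → Mat N}

lemma IsInvariantProjector.mul_fundSol (hP : IsInvariantProjector A P) (k : ℤ) :
    P k * fundSol A k = (fundSol A k : Mat N) * P 0 := by
  have step (k : ℤ) : P (k + 1) * fundSol A (k + 1) = (fundSol A (k + 1) : Mat N) * P 0 ↔
      P k * fundSol A k = (fundSol A k : Mat N) * P 0 := by
    rw [fundSol_add_one, Units.val_mul, ← mul_assoc, hP.2, mul_assoc, mul_assoc,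
      (A k).isUnit.mul_right_inj]
  induction k using Int.induction_on with
  | zero => simp [fundSol, fundSolNat]
  | succ n ih => exact (step n).2 ih
  | pred n ih => exact (step _).1 (by rwa [sub_add_cancel])

lemma IsInvariantProjector.mul_evol (hP : IsInvariantProjector A P) (k l : ℤ) :
    P k * evol A k l = evol A k l * P l := by
  have hl : P 0 * ((fundSol A l)⁻¹ : GL (Fin N) ℝ) =
      ((fundSol A l)⁻¹ : GL (Fin N) ℝ) * P l := by
    rw [Units.eq_inv_mul_iff_mul_eq, ← mul_assoc, ← hP.mul_fundSol, mul_assoc, Units.mul_inv,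
      mul_one]
  rw [evol, Units.val_mul, ← mul_assoc, hP.mul_fundSol, mul_assoc, hl, mul_assoc]

lemma IsInvariantProjector.rank_eq (hP : IsInvariantProjector A P) (k l : ℤ) :
    (P k).rank = (P l).rank := by
  rw [← Matrix.rank_mul_eq_left_of_isUnit_det _ _ (isUnit_det_evol A k l), hP.mul_evol,
    Matrix.rank_mul_eq_right_of_isUnit_det _ _ (isUnit_det_evol A k l)]

lemma IsInvariantProjector.one_sub (hP : IsInvariantProjector A P) :
    IsInvariantProjector A (fun k => 1 - P k) :=
  ⟨fun k => IsIdempotentElem.one_sub (hP.1 k),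
    fun k => by simp only [sub_mul, mul_sub, hP.2, one_mul, mul_one]⟩

end Evolution

section Weighted

variable {N : ℕ} (A : ℤ → GL (Fin N) ℝ) {γ ζ : ℝ}

@[simp]
lemma evolW_self (γ : ℝ) (l : ℤ) : evolW A γ l l = 1 := by
  simp [evolW]

lemma evolW_mul_evolW (hγ : γ ≠ 0) (k m l : ℤ) :
    evolW A γ k m * evolW A γ m l = evolW A γ k l := by
  rw [evolW, evolW, evolW, smul_mul_smul, ← zpow_add₀ hγ, evol_mul_evol]
  ring_nf

lemma evolW_eq_zpow_smul (hγ : γ ≠ 0) (hζ : ζ ≠ 0) (k l : ℤ) :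
    evolW A ζ k l = (γ / ζ) ^ (k - l) • evolW A γ k l := by
  rw [evolW, evolW, smul_smul, div_zpow, ← neg_sub k l, _root_.zpow_neg, _root_.zpow_neg]
  congr 1
  field_simp

lemma norm_evolW_mulVec (hγ : 0 < γ) (hζ : 0 < ζ) (k l : ℤ) (ξ : Fin N → ℝ) :
    ‖evolW A ζ k l *ᵥ ξ‖ = (γ / ζ) ^ (k - l) * ‖evolW A γ k l *ᵥ ξ‖ := by
  rw [evolW_eq_zpow_smul A hγ.ne' hζ.ne', Matrix.smul_mulVec, norm_smul,
    Real.norm_of_nonneg (by positivity)]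

lemma norm_evolW_mul (hγ : 0 < γ) (hζ : 0 < ζ) (k l : ℤ) (M : Mat N) :
    ‖evolW A ζ k l * M‖ = (γ / ζ) ^ (k - l) * ‖evolW A γ k l * M‖ := by
  rw [evolW_eq_zpow_smul A hγ.ne' hζ.ne', Matrix.smul_mul, norm_smul,
    Real.norm_of_nonneg (by positivity)]

lemma norm_evol_mulVec_mul_zpow (hγ : 0 < γ) (k l : ℤ) (ξ : Fin N → ℝ) :
    ‖evol A k l *ᵥ ξ‖ * γ ^ (-k) = ‖evolW A γ k l *ᵥ ξ‖ * γ ^ (-l) := by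
  have hk : γ ^ (-k) = γ ^ (l - k) * γ ^ (-l) := by rw [← zpow_add₀ hγ.ne']; ring_nf
  rw [evolW, Matrix.smul_mulVec, norm_smul, Real.norm_of_nonneg (by positivity), hk]
  ring

lemma mem_stableSet_iff {ε : ℝ} (hγ : 0 < γ) (hε : 0 < ε) {l : ℤ} {ξ : Fin N → ℝ} :
    ξ ∈ stableSet A γ ε l ↔ ∃ C, ∀ k, l ≤ k → ‖evolW A γ k l *ᵥ ξ‖ ≤ C := by
  simp only [stableSet, Set.mem_ofPred_eq, norm_evol_mulVec_mul_zpow A hγ, mul_assoc]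
  exact exists_forall_mul_le_iff (by positivity)

lemma mem_unstableSet_iff {ε : ℝ} (hγ : 0 < γ) (hε : 0 < ε) {l : ℤ} {ξ : Fin N → ℝ} :
    ξ ∈ unstableSet A γ ε l ↔ ∃ C, ∀ k, k ≤ l → ‖evolW A γ k l *ᵥ ξ‖ ≤ C := by
  simp only [unstableSet, Set.mem_ofPred_eq, norm_evol_mulVec_mul_zpow A hγ, mul_assoc]
  exact exists_forall_mul_le_iff (by positivity)

lemma stableSet_eps_eq {ε : ℝ} (hγ : 0 < γ) (hε : 0 < ε) (l : ℤ) :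
    stableSet A γ ε l = stableSet A γ 1 l := by
  ext ξ
  rw [mem_stableSet_iff A hγ hε, mem_stableSet_iff A hγ one_pos]

lemma unstableSet_eps_eq {ε : ℝ} (hγ : 0 < γ) (hε : 0 < ε) (l : ℤ) :
    unstableSet A γ ε l = unstableSet A γ 1 l := by
  ext ξ
  rw [mem_unstableSet_iff A hγ hε, mem_unstableSet_iff A hγ one_pos]

lemma stableSet_mono (hγ : 0 < γ) (hγζ : γ ≤ ζ) (l : ℤ) :
    stableSet A γ 1 l ⊆ stableSet A ζ 1 l := by
  have hζ := hγ.trans_le hγζ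
  intro ξ hξ
  obtain ⟨C, hC⟩ := (mem_stableSet_iff A hγ one_pos).1 hξ
  refine (mem_stableSet_iff A hζ one_pos).2 ⟨C, fun k hk => ?_⟩
  rw [norm_evolW_mulVec A hγ hζ]
  exact (mul_le_of_le_one_left (norm_nonneg _)
    (zpow_le_one₀ (by positivity) (div_le_one_of_le₀ hγζ hζ.le) (by omega))).trans (hC k hk)

lemma unstableSet_anti (hγ : 0 < γ) (hγζ : γ ≤ ζ) (l : ℤ) :
    unstableSet A ζ 1 l ⊆ unstableSet A γ 1 l := by
  have hζ := hγ.trans_le hγζ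
  intro ξ hξ
  obtain ⟨C, hC⟩ := (mem_unstableSet_iff A hζ one_pos).1 hξ
  refine (mem_unstableSet_iff A hγ one_pos).2 ⟨C, fun k hk => ?_⟩
  rw [norm_evolW_mulVec A hζ hγ]
  exact (mul_le_of_le_one_left (norm_nonneg _)
    (zpow_le_one_of_nonpos₀ ((one_le_div₀ hγ).2 hγζ) (by omega))).trans (hC k hk)

variable {A} {P : ℤ → Mat N}

lemma IsInvariantProjector.mul_evolW (hP : IsInvariantProjector A P) (γ : ℝ) (k l : ℤ) :
    P k * evolW A γ k l = evolW A γ k l * P l := by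
  rw [evolW, Matrix.mul_smul, Matrix.smul_mul, hP.mul_evol]

lemma IsInvariantProjector.evolW_mul_mul_evolW (hP : IsInvariantProjector A P) (hγ : γ ≠ 0)
    (k l : ℤ) : evolW A γ l k * P k * evolW A γ k l = P l := by
  rw [mul_assoc, hP.mul_evolW, ← mul_assoc, evolW_mul_evolW A hγ, evolW_self, one_mul]

end Weighted

section Dichotomy

variable {N : ℕ} {A : ℤ → GL (Fin N) ℝ} {γ : ℝ} {P : ℤ → Mat N} {K α ε : ℝ}

lemma NEDWith.eps_eq_one [NeZero N] (h : NEDWith A γ P K α ε) : ε = 1 := by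
  obtain ⟨-, -, -, -, hε, hfwd, hbwd⟩ := h
  refine le_antisymm (not_lt.1 fun hε1 => ?_) hε
  obtain ⟨n, hn⟩ := pow_unbounded_of_one_lt (2 * K) hε1
  have hP := hfwd (-n) (-n) le_rfl
  have hQ := hbwd (-n) (-n) le_rfl
  simp only [evolW_self, one_mul, sub_self, zpow_zero, mul_one, _root_.zpow_neg,
    zpow_natCast] at hP hQ
  have : (1 : ℝ) ≤ 2 * K * (ε ^ n)⁻¹ := by
    calc (1 : ℝ) = ‖P (-n) + (1 - P (-n))‖ := by rw [add_sub_cancel, norm_one]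
      _ ≤ ‖P (-n)‖ + ‖1 - P (-n)‖ := norm_add_le _ _
      _ ≤ 2 * K * (ε ^ n)⁻¹ := by linarith
  rw [← div_eq_mul_inv, le_div_iff₀ (by positivity), one_mul] at this
  linarith

lemma NEDWith.eps_one (h : NEDWith A γ P K α ε) : NEDWith A γ P K α 1 := by
  rcases Nat.eq_zero_or_pos N with rfl | hN
  · obtain ⟨hP, hK, hα0, hα1, -, -, -⟩ := h
    exact ⟨hP, hK, hα0, hα1, le_rfl, fun _ _ _ => by rw [norm_of_subsingleton]; positivity,
      fun _ _ _ => by rw [norm_of_subsingleton]; positivity⟩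
  · have : NeZero N := ⟨hN.ne'⟩
    rwa [← h.eps_eq_one]

lemma hasStrongNED_iff_hasED : HasStrongNED A γ ↔ HasED A γ :=
  ⟨fun ⟨P, K, α, _, h, _⟩ => ⟨P, K, α, h.eps_one⟩,
    fun ⟨P, K, α, h⟩ => ⟨P, K, α, 1, h, by simpa using h.2.2.2.1⟩⟩

lemma sigmaNED_eq_sigmaED : SigmaNED A = SigmaED A := by
  ext γ
  simp only [SigmaNED, SigmaED, Set.mem_ofPred_eq, hasStrongNED_iff_hasED]

lemma NEDWith.norm_evolW_mul_le (h : NEDWith A γ P K α 1) {k l : ℤ} (hkl : l ≤ k) :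
    ‖evolW A γ k l * P l‖ ≤ K * α ^ (k - l) := by
  simpa using h.2.2.2.2.2.1 k l hkl

lemma NEDWith.norm_evolW_mul_one_sub_le (h : NEDWith A γ P K α 1) {k l : ℤ} (hkl : k ≤ l) :
    ‖evolW A γ k l * (1 - P l)‖ ≤ K * α ^ (l - k) := by
  have := h.2.2.2.2.2.2 k l hkl
  rwa [_root_.one_zpow, mul_one, one_div, _root_.inv_zpow', neg_sub] at this

lemma NEDWith.stableSet_eq_range (h : NEDWith A γ P K α 1) (hγ : 0 < γ) (l : ℤ) :
    stableSet A γ 1 l = LinearMap.range (P l).mulVecLin := by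
  have ⟨hP, hK, hα0, hα1, _⟩ := h
  ext ξ
  rw [mem_stableSet_iff A hγ one_pos, SetLike.mem_coe,
    LinearMap.IsIdempotentElem.mem_range_iff (Matrix.isIdempotentElem_mulVecLin (hP.1 l)),
    Matrix.mulVecLin_apply]
  constructor
  · rintro ⟨C, hC⟩
    have decay (n : ℕ) : ‖(1 - P l) *ᵥ ξ‖ ≤ K * C * α ^ n := by
      set k := l + n
      calc ‖(1 - P l) *ᵥ ξ‖
          = ‖(evolW A γ l k * (1 - P k)) *ᵥ (evolW A γ k l *ᵥ ξ)‖ := by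
            rw [Matrix.mulVec_mulVec, hP.one_sub.evolW_mul_mul_evolW hγ.ne']
        _ ≤ ‖evolW A γ l k * (1 - P k)‖ * ‖evolW A γ k l *ᵥ ξ‖ :=
            Matrix.linfty_opNorm_mulVec _ _
        _ ≤ K * α ^ (k - l) * C := mul_le_mul (h.norm_evolW_mul_one_sub_le (by omega))
            (hC k (by omega)) (norm_nonneg _) (by positivity)
        _ = K * C * α ^ n := by simp only [k, add_sub_cancel_left, zpow_natCast]; ring
    have := nonpos_of_forall_le_mul_pow hα0.le hα1 decay
    rwa [norm_le_zero_iff, Matrix.sub_mulVec, Matrix.one_mulVec, sub_eq_zero, eq_comm] at this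
  · intro hξ
    refine ⟨K * ‖ξ‖, fun k hk => ?_⟩
    calc ‖evolW A γ k l *ᵥ ξ‖ = ‖(evolW A γ k l * P l) *ᵥ ξ‖ := by
          rw [← Matrix.mulVec_mulVec, hξ]
      _ ≤ K * α ^ (k - l) * ‖ξ‖ := (Matrix.linfty_opNorm_mulVec _ _).trans
          (mul_le_mul_of_nonneg_right (h.norm_evolW_mul_le hk) (norm_nonneg _))
      _ ≤ K * ‖ξ‖ := mul_le_mul_of_nonneg_right (mul_le_of_le_one_right (by linarith)
          (zpow_le_one₀ hα0 hα1.le (by omega))) (norm_nonneg _)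

lemma NEDWith.unstableSet_eq_ker (h : NEDWith A γ P K α 1) (hγ : 0 < γ) (l : ℤ) :
    unstableSet A γ 1 l = LinearMap.ker (P l).mulVecLin := by
  have ⟨hP, hK, hα0, hα1, _⟩ := h
  ext ξ
  rw [mem_unstableSet_iff A hγ one_pos, SetLike.mem_coe, LinearMap.mem_ker,
    Matrix.mulVecLin_apply]
  constructor
  · rintro ⟨C, hC⟩
    have decay (n : ℕ) : ‖P l *ᵥ ξ‖ ≤ K * C * α ^ n := by
      set k := l - n
      calc ‖P l *ᵥ ξ‖ = ‖(evolW A γ l k * P k) *ᵥ (evolW A γ k l *ᵥ ξ)‖ := by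
            rw [Matrix.mulVec_mulVec, hP.evolW_mul_mul_evolW hγ.ne']
        _ ≤ ‖evolW A γ l k * P k‖ * ‖evolW A γ k l *ᵥ ξ‖ := Matrix.linfty_opNorm_mulVec _ _
        _ ≤ K * α ^ (l - k) * C := mul_le_mul (h.norm_evolW_mul_le (by omega))
            (hC k (by omega)) (norm_nonneg _) (by positivity)
        _ = K * C * α ^ n := by simp only [k, sub_sub_cancel, zpow_natCast]; ring
    exact norm_le_zero_iff.1 (nonpos_of_forall_le_mul_pow hα0.le hα1 decay)
  · intro hξ
    have hξ' : (1 - P l) *ᵥ ξ = ξ := by rw [Matrix.sub_mulVec, Matrix.one_mulVec, hξ, sub_zero]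
    refine ⟨K * ‖ξ‖, fun k hk => ?_⟩
    calc ‖evolW A γ k l *ᵥ ξ‖ = ‖(evolW A γ k l * (1 - P l)) *ᵥ ξ‖ := by
          rw [← Matrix.mulVec_mulVec, hξ']
      _ ≤ K * α ^ (l - k) * ‖ξ‖ := (Matrix.linfty_opNorm_mulVec _ _).trans
          (mul_le_mul_of_nonneg_right (h.norm_evolW_mul_one_sub_le hk) (norm_nonneg _))
      _ ≤ K * ‖ξ‖ := mul_le_mul_of_nonneg_right (mul_le_of_le_one_right (by linarith)
          (zpow_le_one₀ hα0 hα1.le (by omega))) (norm_nonneg _)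

lemma NEDWith.finrank_stableSet (h : NEDWith A γ P K α 1) (hγ : 0 < γ) (l : ℤ) :
    Set.finrank ℝ (stableSet A γ 1 l) = (P 0).rank := by
  rw [h.stableSet_eq_range hγ, Submodule.setFinrank_coe, ← Matrix.rank, h.1.rank_eq]

lemma NEDWith.finrank_unstableSet (h : NEDWith A γ P K α 1) (hγ : 0 < γ) (l : ℤ) :
    Set.finrank ℝ (unstableSet A γ 1 l) = N - (P 0).rank := by
  have := (P l).rank_add_finrank_ker
  rw [Fintype.card_fin] at this
  rw [h.unstableSet_eq_ker hγ, Submodule.setFinrank_coe, ← h.1.rank_eq l 0]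
  omega

lemma NEDWith.of_between {γa γb ζ Ka αa Kb αb : ℝ} (hγa : 0 < γa) (hζ : 0 < ζ)
    (ha : NEDWith A γa P Ka αa 1) (hb : NEDWith A γb P Kb αb 1)
    (hlo : γa * αa < ζ) (hhi : ζ * αb < γb) :
    NEDWith A ζ P (max Ka Kb) (max (γa * αa / ζ) (ζ * αb / γb)) 1 := by
  have ⟨hP, hKa, hαa0, _⟩ := ha
  have ⟨_, hKb, hαb0, _⟩ := hb
  have hγb : 0 < γb := by nlinarith
  refine ⟨hP, hKa.trans (le_max_left _ _), by positivity,
    max_lt ((div_lt_one hζ).2 hlo) ((div_lt_one hγb).2 hhi), le_rfl, fun k l hkl => ?_,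
    fun k l hkl => ?_⟩
  · calc ‖evolW A ζ k l * P l‖ = (γa / ζ) ^ (k - l) * ‖evolW A γa k l * P l‖ :=
          norm_evolW_mul A hγa hζ _ _ _
      _ ≤ (γa / ζ) ^ (k - l) * (Ka * αa ^ (k - l)) :=
          mul_le_mul_of_nonneg_left (ha.norm_evolW_mul_le hkl) (by positivity)
      _ = Ka * (γa * αa / ζ) ^ (k - l) := by
          rw [mul_div_right_comm, mul_zpow]; ring
      _ ≤ max Ka Kb * max (γa * αa / ζ) (ζ * αb / γb) ^ (k - l) * 1 ^ l := by
          rw [_root_.one_zpow, mul_one]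
          exact mul_le_mul (le_max_left _ _) (zpow_le_zpow_left₀ (by omega) (by positivity)
            (le_max_left _ _)) (by positivity) (by positivity)
  · calc ‖evolW A ζ k l * (1 - P l)‖ = (γb / ζ) ^ (k - l) * ‖evolW A γb k l * (1 - P l)‖ :=
          norm_evolW_mul A hγb hζ _ _ _
      _ ≤ (γb / ζ) ^ (k - l) * (Kb * αb ^ (l - k)) :=
          mul_le_mul_of_nonneg_left (hb.norm_evolW_mul_one_sub_le hkl) (by positivity)
      _ = Kb * (ζ * αb / γb) ^ (l - k) := by
          rw [← inv_div, _root_.inv_zpow', neg_sub, mul_div_right_comm, mul_zpow]; ring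
      _ ≤ max Ka Kb * (1 / max (γa * αa / ζ) (ζ * αb / γb)) ^ (k - l) * 1 ^ l := by
          rw [_root_.one_zpow, mul_one, one_div, _root_.inv_zpow', neg_sub]
          exact mul_le_mul (le_max_right _ _) (zpow_le_zpow_left₀ (by omega) (by positivity)
            (le_max_right _ _)) (by positivity) (by positivity)

lemma HasED.eventually_stableSet_eq {ζ : ℝ} (h : HasED A ζ) (hζ : 0 < ζ) (l : ℤ) :
    ∀ᶠ ζ' in 𝓝 ζ, stableSet A ζ' 1 l = stableSet A ζ 1 l := by
  obtain ⟨P, K, α, hP⟩ := h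
  have ⟨_, _, hα0, hα1, _⟩ := hP
  have hlo : ζ * α < ζ := mul_lt_of_lt_one_right hζ hα1
  filter_upwards [Ioo_mem_nhds hlo ((lt_div_iff₀ hα0).2 hlo)] with ζ' hζ'
  have hζ'0 : 0 < ζ' := (mul_pos hζ hα0).trans hζ'.1
  have hζ'ED := NEDWith.of_between hζ hζ'0 hP hP hζ'.1 ((lt_div_iff₀ hα0).1 hζ'.2)
  rw [hζ'ED.stableSet_eq_range hζ'0, hP.stableSet_eq_range hζ]

lemma finrank_stableSet_eq_of_forall_hasED {γ₁ γ₂ : ℝ} (h0 : 0 < γ₁) (h12 : γ₁ ≤ γ₂)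
    (hED : ∀ ζ ∈ Set.Icc γ₁ γ₂, HasED A ζ) (l : ℤ) :
    Set.finrank ℝ (stableSet A γ₁ 1 l) = Set.finrank ℝ (stableSet A γ₂ 1 l) := by
  refine isPreconnected_Icc.constant (f := fun ζ => Set.finrank ℝ (stableSet A ζ 1 l))
    (fun ζ hζ => ContinuousAt.continuousWithinAt ?_) (Set.left_mem_Icc.2 h12)
    (Set.right_mem_Icc.2 h12)
  refine (continuousAt_const (y := Set.finrank ℝ (stableSet A ζ 1 l))).congr ?_
  filter_upwards [(hED ζ hζ).eventually_stableSet_eq (h0.trans_le hζ.1) l] with ζ' hζ'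
  rw [hζ']

end Dichotomy

section TwoWeights

variable {N : ℕ} {A : ℤ → GL (Fin N) ℝ} {γ₁ γ₂ K₁ α₁ K₂ α₂ : ℝ} {P₁ P₂ : ℤ → Mat N}

lemma NEDWith.range_le_range (h1 : NEDWith A γ₁ P₁ K₁ α₁ 1) (h2 : NEDWith A γ₂ P₂ K₂ α₂ 1)
    (h0 : 0 < γ₁) (h12 : γ₁ ≤ γ₂) (l : ℤ) :
    LinearMap.range (P₁ l).mulVecLin ≤ LinearMap.range (P₂ l).mulVecLin := by
  have := stableSet_mono A h0 h12 l
  rwa [h1.stableSet_eq_range h0, h2.stableSet_eq_range (h0.trans_le h12),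
    SetLike.coe_subset_coe] at this

lemma NEDWith.ker_le_ker (h1 : NEDWith A γ₁ P₁ K₁ α₁ 1) (h2 : NEDWith A γ₂ P₂ K₂ α₂ 1)
    (h0 : 0 < γ₁) (h12 : γ₁ ≤ γ₂) (l : ℤ) :
    LinearMap.ker (P₂ l).mulVecLin ≤ LinearMap.ker (P₁ l).mulVecLin := by
  have := unstableSet_anti A h0 h12 l
  rwa [h1.unstableSet_eq_ker h0, h2.unstableSet_eq_ker (h0.trans_le h12),
    SetLike.coe_subset_coe] at this

lemma NEDWith.eq_of_rank_le (h1 : NEDWith A γ₁ P₁ K₁ α₁ 1) (h2 : NEDWith A γ₂ P₂ K₂ α₂ 1)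
    (h0 : 0 < γ₁) (h12 : γ₁ ≤ γ₂) (hr : (P₂ 0).rank ≤ (P₁ 0).rank) : P₁ = P₂ := by
  funext l
  have hrange_le := h1.range_le_range h2 h0 h12 l
  have hr : (P₂ l).rank ≤ (P₁ l).rank := by rwa [h1.1.rank_eq l 0, h2.1.rank_eq l 0]
  have hker := Submodule.eq_of_le_of_finrank_le (h1.ker_le_ker h2 h0 h12 l) (by
    have := Submodule.finrank_mono hrange_le
    have := (P₁ l).rank_add_finrank_ker
    have := (P₂ l).rank_add_finrank_ker
    rw [Matrix.rank, Matrix.rank] at *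
    omega)
  exact Matrix.mulVec_injective (congrArg DFunLike.coe <| LinearMap.IsIdempotentElem.ext
    (Matrix.isIdempotentElem_mulVecLin (h1.1.1 l)) (Matrix.isIdempotentElem_mulVecLin (h2.1.1 l))
    ⟨Submodule.eq_of_le_of_finrank_le hrange_le hr, hker.symm⟩)

lemma NEDWith.exists_unstableSet_inter_stableSet_ne_iff (h1 : NEDWith A γ₁ P₁ K₁ α₁ 1)
    (h2 : NEDWith A γ₂ P₂ K₂ α₂ 1) (h0 : 0 < γ₁) (h12 : γ₁ ≤ γ₂) :
    (∃ l, unstableSet A γ₁ 1 l ∩ stableSet A γ₂ 1 l ≠ {0}) ↔ (P₁ 0).rank < (P₂ 0).rank := by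
  have key (l : ℤ) :
      unstableSet A γ₁ 1 l ∩ stableSet A γ₂ 1 l ≠ {0} ↔ (P₁ l).rank < (P₂ l).rank := by
    rw [h1.unstableSet_eq_ker h0, h2.stableSet_eq_range (h0.trans_le h12), ← Submodule.coe_inf,
      ← Submodule.bot_coe (R := ℝ), Ne, SetLike.coe_set_eq, ← Ne, ← Submodule.one_le_finrank_iff,
      Matrix.rank, Matrix.rank, Submodule.finrank_eq_add_finrank_inf_of_isCompl
        (LinearMap.IsIdempotentElem.isCompl (Matrix.isIdempotentElem_mulVecLin (h1.1.1 l)))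
        (h1.range_le_range h2 h0 h12 l)]
    omega
  simp only [key, h1.1.rank_eq _ 0, h2.1.rank_eq _ 0, exists_const]

lemma NEDWith.exists_mem_sigmaED_iff (h1 : NEDWith A γ₁ P₁ K₁ α₁ 1)
    (h2 : NEDWith A γ₂ P₂ K₂ α₂ 1) (h0 : 0 < γ₁) (h12 : γ₁ < γ₂) :
    (∃ ζ ∈ Set.Ioo γ₁ γ₂, ζ ∈ SigmaED A) ↔ (P₁ 0).rank < (P₂ 0).rank := by
  constructor
  · rintro ⟨ζ, hζ, -, hζED⟩
    by_contra! hr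
    obtain rfl := h1.eq_of_rank_le h2 h0 h12.le hr
    have hζ0 := h0.trans hζ.1
    exact hζED ⟨_, _, _, h1.of_between h0 hζ0 h2
      ((mul_lt_of_lt_one_right h0 h1.2.2.2.1).trans hζ.1)
      ((mul_lt_of_lt_one_right hζ0 h2.2.2.2.1).trans hζ.2)⟩
  · intro hr
    by_contra! hED
    have hED' : ∀ ζ ∈ Set.Icc γ₁ γ₂, HasED A ζ := by
      intro ζ hζ
      rcases hζ.1.eq_or_lt with rfl | h1ζ
      · exact ⟨P₁, K₁, α₁, h1⟩
      rcases hζ.2.eq_or_lt with rfl | hζ2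
      · exact ⟨P₂, K₂, α₂, h2⟩
      exact not_not.1 fun hζ' => hED ζ ⟨h1ζ, hζ2⟩ ⟨h0.trans h1ζ, hζ'⟩
    have := finrank_stableSet_eq_of_forall_hasED h0 h12.le hED' 0
    rw [h1.finrank_stableSet h0, h2.finrank_stableSet (h0.trans h12)] at this
    omega

end TwoWeights

theorem spectral_interval_tfae_general {N : ℕ} (A : ℤ → GL (Fin N) ℝ)
    (γ₁ γ₂ : ℝ) (h0 : 0 < γ₁) (h12 : γ₁ < γ₂)
    (P₁ P₂ : ℤ → Mat N) (K₁ α₁ ε₁ K₂ α₂ ε₂ : ℝ)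
    (h1 : NEDWith A γ₁ P₁ K₁ α₁ ε₁)
    (h2 : NEDWith A γ₂ P₂ K₂ α₂ ε₂) :
    List.TFAE [
      -- (A') the intersection bundle is nontrivial at some fiber
      (∃ l : ℤ, unstableSet A γ₁ ε₁ l ∩ stableSet A γ₂ ε₂ l ≠ {0}),
      -- (B') there is spectrum inside (γ₁,γ₂)
      (∃ ζ ∈ Set.Ioo γ₁ γ₂, ζ ∈ SigmaNED A),
      -- (C') the stable dimension strictly increases
      (∀ l : ℤ, Set.finrank ℝ (stableSet A γ₁ ε₁ l) <
        Set.finrank ℝ (stableSet A γ₂ ε₂ l)),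
      -- (D') the unstable dimension strictly decreases
      (∀ l : ℤ, Set.finrank ℝ (unstableSet A γ₂ ε₂ l) <
        Set.finrank ℝ (unstableSet A γ₁ ε₁ l))] := by
  have hγ₂ : 0 < γ₂ := h0.trans h12
  have hε₁ : 0 < ε₁ := one_pos.trans_le h1.2.2.2.2.1
  have hε₂ : 0 < ε₂ := one_pos.trans_le h2.2.2.2.2.1
  have e₁ := h1.eps_one
  have e₂ := h2.eps_one
  simp only [stableSet_eps_eq A h0 hε₁, stableSet_eps_eq A hγ₂ hε₂, unstableSet_eps_eq A h0 hε₁,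
    unstableSet_eps_eq A hγ₂ hε₂, sigmaNED_eq_sigmaED, e₁.finrank_stableSet h0,
    e₂.finrank_stableSet hγ₂, e₁.finrank_unstableSet h0, e₂.finrank_unstableSet hγ₂, forall_const]
  have hr₂ := Matrix.rank_le_width (P₂ 0)
  refine List.tfae_of_forall ((P₁ 0).rank < (P₂ 0).rank) _ ?_
  simp only [List.mem_cons, List.not_mem_nil, or_false, forall_eq_or_imp, forall_eq, iff_self]
  exact ⟨e₁.exists_unstableSet_inter_stableSet_ne_iff e₂ h0 h12.le,
    e₁.exists_mem_sigmaED_iff e₂ h0 h12, trivial, by omega⟩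

/-- (Alternative II of the resolvent lemma.) For `γ₁ < γ₂` in the
resolvent set, with `F(l) = U_{γ₁}(l) ∩ S_{γ₂}(l)`, the statements (A') `F(l) ≠ {0}`
for some `l`, (B') some `ζ ∈ (γ₁,γ₂)` belongs to the spectrum,
(C') `dim S_{γ₁}(l) < dim S_{γ₂}(l)` for all `l`, and (D') `dim U_{γ₁}(l) > dim U_{γ₂}(l)`
for all `l`, are pairwise equivalent. -/
theorem spectral_interval_tfae {N : ℕ} (A : ℤ → GL (Fin N) ℝ)
    (γ₁ γ₂ : ℝ) (h0 : 0 < γ₁) (h12 : γ₁ < γ₂)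
    (P₁ P₂ : ℤ → Mat N) (K₁ α₁ ε₁ K₂ α₂ ε₂ : ℝ)
    (h1 : NEDWith A γ₁ P₁ K₁ α₁ ε₁) (h1s : α₁ * ε₁ ^ 2 < 1)
    (h2 : NEDWith A γ₂ P₂ K₂ α₂ ε₂) (h2s : α₂ * ε₂ ^ 2 < 1) :
    List.TFAE [
      -- (A') the intersection bundle is nontrivial at some fiber
      (∃ l : ℤ, unstableSet A γ₁ ε₁ l ∩ stableSet A γ₂ ε₂ l ≠ {0}),
      -- (B') there is spectrum inside (γ₁,γ₂)
      (∃ ζ ∈ Set.Ioo γ₁ γ₂, ζ ∈ SigmaNED A),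
      -- (C') the stable dimension strictly increases
      (∀ l : ℤ, Set.finrank ℝ (stableSet A γ₁ ε₁ l) <
        Set.finrank ℝ (stableSet A γ₂ ε₂ l)),
      -- (D') the unstable dimension strictly decreases
      (∀ l : ℤ, Set.finrank ℝ (unstableSet A γ₂ ε₂ l) <
        Set.finrank ℝ (unstableSet A γ₁ ε₁ l))] :=
  spectral_interval_tfae_general A γ₁ γ₂ h0 h12 P₁ P₂ K₁ α₁ ε₁ K₂ α₂ ε₂ h1 h2
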